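/- Let τ be a density matrix indexed by triples (a,b,d) ∈ Fin d_A × Fin d_B × Fin d_D, let σ be a density matrix of size d_C × d_C, and let σ̂ = σ ⊗ τ be their Kronecker product, regarded as a state on the four subsystems A, B, C, D. Then for every real q ≠ 1, q > 0, the conditional quantum Tsallis mutual information satisfies the identity I_q(A:B|CD)_{σ̂} = (∑_{i with μ_i>0} μ_i^q) · I_q(A:B|D)_τ, where μ_i are the eigenvalues of σ; consequently, for q > 1, if I_q(A:B|D)_τ ≤ f(q,d_A,d_B) then also I_q(A:B|CD)_{σ̂} ≤ f(q,d_A,d_B). -/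

import Mathlib

/-!
Diagonalising `A` and `B` simultaneously diagonalises `A ⊗ₖ B`, so the eigenvalues of the
Kronecker product are the products `λᵢ μⱼ` and, for positive semidefinite factors, the power sum
`P(A) = ∑_{λ > 0} λ^q` is multiplicative. Partial traces over `A` and `B` commute with `σ ⊗ₖ ·`,
hence every entropy of `σ ⊗ₖ τ` in the conditional mutual information is
`(P(σ) P(τ_X) - 1) / (1 - q)`; the four constants cancel in the alternating sum, leaving
`P(σ) · I_q(A:B|D)_τ`. For `q > 1` and `tr σ = 1`, `0 ≤ P(σ) ≤ ∑ μᵢ = 1` and `f ≥ 0`, which gives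
the bound.
-/

open Finset Matrix Kronecker ComplexOrder

/-- Quantum Tsallis entropy of order `q` of a matrix `ρ` (intended: a density
matrix), defined via the eigenvalues of `ρ` when `ρ` is Hermitian, with the sum
restricted to the strictly positive eigenvalues. -/
noncomputable def qTsallis {n : Type*} [Fintype n] [DecidableEq n]
    (q : ℝ) (ρ : Matrix n n ℂ) : ℝ :=
  if h : ρ.IsHermitian then
    (1 / (1 - q)) * ((∑ i ∈ univ.filter (fun i => 0 < h.eigenvalues i),
      h.eigenvalues i ^ q) - 1)
  else 0

/-- The bound `f(q,a,b) = (1/(q−1))·(1−a^{1−q})·(1−b^{1−q})`. -/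
noncomputable def fBound (q : ℝ) (a b : ℕ) : ℝ :=
  (1 / (q - 1)) * (1 - (a : ℝ) ^ (1 - q)) * (1 - (b : ℝ) ^ (1 - q))

/-- Partial trace over the second factor of a tripartite matrix. -/
noncomputable def ptraceB {α β δ : Type*} [Fintype β]
    (ρ : Matrix (α × β × δ) (α × β × δ) ℂ) : Matrix (α × δ) (α × δ) ℂ :=
  Matrix.of fun w w' => ∑ b, ρ (w.1, b, w.2) (w'.1, b, w'.2)

/-- Partial trace over the first factor of a tripartite matrix. -/
noncomputable def ptraceA {α β δ : Type*} [Fintype α]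
    (ρ : Matrix (α × β × δ) (α × β × δ) ℂ) : Matrix (β × δ) (β × δ) ℂ :=
  Matrix.of fun w w' => ∑ a, ρ (a, w.1, w.2) (a, w'.1, w'.2)

/-- Partial trace over the first two factors of a tripartite matrix. -/
noncomputable def ptraceAB {α β δ : Type*} [Fintype α] [Fintype β]
    (ρ : Matrix (α × β × δ) (α × β × δ) ℂ) : Matrix δ δ ℂ :=
  Matrix.of fun d d' => ∑ a, ∑ b, ρ (a, b, d) (a, b, d')

/-- Partial trace over the third factor (`B`) of a four-partite matrix indexed as
`C × A × B × D`. -/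
noncomputable def ptraceB4 {γ α β δ : Type*} [Fintype β]
    (ρ : Matrix (γ × α × β × δ) (γ × α × β × δ) ℂ) :
    Matrix (γ × α × δ) (γ × α × δ) ℂ :=
  Matrix.of fun w w' => ∑ b, ρ (w.1, w.2.1, b, w.2.2) (w'.1, w'.2.1, b, w'.2.2)

/-- Partial trace over the second factor (`A`) of a four-partite matrix indexed as
`C × A × B × D`. -/
noncomputable def ptraceA4 {γ α β δ : Type*} [Fintype α]
    (ρ : Matrix (γ × α × β × δ) (γ × α × β × δ) ℂ) :
    Matrix (γ × β × δ) (γ × β × δ) ℂ :=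
  Matrix.of fun w w' => ∑ a, ρ (w.1, a, w.2.1, w.2.2) (w'.1, a, w'.2.1, w'.2.2)

/-- Partial trace over the factors `A` and `B` of a four-partite matrix indexed as
`C × A × B × D`. -/
noncomputable def ptraceAB4 {γ α β δ : Type*} [Fintype α] [Fintype β]
    (ρ : Matrix (γ × α × β × δ) (γ × α × β × δ) ℂ) :
    Matrix (γ × δ) (γ × δ) ℂ :=
  Matrix.of fun w w' => ∑ a, ∑ b, ρ (w.1, a, b, w.2) (w'.1, a, b, w'.2)

namespace Matrix.IsHermitian

open Polynomial

variable {𝕜 n m ι : Type*} [RCLike 𝕜] [Fintype n] [DecidableEq n] [Fintype m] [DecidableEq m]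
  [Fintype ι] {A : Matrix n n 𝕜} {B : Matrix m m 𝕜}

theorem sum_comp_eigenvalues_of_charpoly_eq (hA : A.IsHermitian) (d : ι → ℝ)
    (h : A.charpoly = ∏ i, (X - C (d i : 𝕜))) (g : ℝ → ℝ) :
    ∑ i, g (hA.eigenvalues i) = ∑ i, g (d i) := by
  have hroots : (univ.val.map hA.eigenvalues).map (RCLike.ofReal : ℝ → 𝕜) =
      (univ.val.map d).map (RCLike.ofReal : ℝ → 𝕜) := by
    rw [Multiset.map_map, Multiset.map_map, ← hA.roots_charpoly_eq_eigenvalues, h,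
      roots_prod _ _ (prod_ne_zero_iff.mpr fun i _ ↦ X_sub_C_ne_zero _)]
    simp
  have := congrArg (fun s ↦ (s.map g).sum) (Multiset.map_injective RCLike.ofReal_injective hroots)
  simpa [Multiset.map_map] using this

theorem charpoly_kronecker (hA : A.IsHermitian) (hB : B.IsHermitian) :
    (A ⊗ₖ B).charpoly =
      ∏ p : n × m, (X - C ((hA.eigenvalues p.1 * hB.eigenvalues p.2 : ℝ) : 𝕜)) := by
  set U : Matrix n n 𝕜 := (hA.eigenvectorUnitary : Matrix n n 𝕜)
  set V : Matrix m m 𝕜 := (hB.eigenvectorUnitary : Matrix m m 𝕜)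
  have hU : star U * U = 1 := Unitary.star_mul_self_of_mem hA.eigenvectorUnitary.2
  have hV : star V * V = 1 := Unitary.star_mul_self_of_mem hB.eigenvectorUnitary.2
  conv_lhs => rw [hA.spectral_theorem, hB.spectral_theorem, Unitary.conjStarAlgAut_apply,
    Unitary.conjStarAlgAut_apply, mul_kronecker_mul, mul_kronecker_mul, charpoly_mul_comm,
    ← mul_assoc, ← mul_kronecker_mul, hU, hV, one_kronecker_one, one_mul,
    diagonal_kronecker_diagonal, charpoly_diagonal]
  simp

end Matrix.IsHermitian

theorem Real.ite_pos_mul_rpow {a b : ℝ} (ha : 0 ≤ a) (hb : 0 ≤ b) (q : ℝ) :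
    (if 0 < a * b then (a * b) ^ q else 0) =
      (if 0 < a then a ^ q else 0) * (if 0 < b then b ^ q else 0) := by
  rcases ha.eq_or_lt with rfl | ha
  · simp
  rcases hb.eq_or_lt with rfl | hb
  · simp
  simp [ha, hb, Real.mul_rpow ha.le hb.le]

namespace Matrix.PosSemidef

variable {𝕜 n m : Type*} [RCLike 𝕜] [Fintype n] [DecidableEq n] [Fintype m] [DecidableEq m]
  {A : Matrix n n 𝕜} {B : Matrix m m 𝕜}

theorem sum_pos_rpow_eigenvalues_kronecker (q : ℝ) (hA : A.PosSemidef) (hB : B.PosSemidef) :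
    ∑ i ∈ univ.filter (fun i => 0 < (hA.kronecker hB).1.eigenvalues i),
        (hA.kronecker hB).1.eigenvalues i ^ q
      = (∑ i ∈ univ.filter (fun i => 0 < hA.1.eigenvalues i), hA.1.eigenvalues i ^ q)
        * ∑ i ∈ univ.filter (fun i => 0 < hB.1.eigenvalues i), hB.1.eigenvalues i ^ q := by
  simp only [sum_filter]
  rw [(hA.kronecker hB).1.sum_comp_eigenvalues_of_charpoly_eq _ (hA.1.charpoly_kronecker hB.1)
    (fun x ↦ if 0 < x then x ^ q else 0), Fintype.sum_prod_type, sum_mul_sum]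
  exact sum_congr rfl fun i _ ↦ sum_congr rfl fun j _ ↦
    Real.ite_pos_mul_rpow (hA.eigenvalues_nonneg i) (hB.eigenvalues_nonneg j) q

theorem sum_pos_rpow_eigenvalues_le_one {q : ℝ} (hq : 1 ≤ q) (hA : A.PosSemidef)
    (htr : A.trace = 1) :
    ∑ i ∈ univ.filter (fun i => 0 < hA.1.eigenvalues i), hA.1.eigenvalues i ^ q ≤ 1 := by
  have hsum : ∑ i, hA.1.eigenvalues i = 1 := by
    have := hA.1.trace_eq_sum_eigenvalues.symm.trans htr
    exact_mod_cast this
  have hle : ∀ i, hA.1.eigenvalues i ≤ 1 := fun i ↦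
    hsum ▸ single_le_sum (fun j _ ↦ hA.eigenvalues_nonneg j) (mem_univ i)
  calc ∑ i ∈ univ.filter (fun i => 0 < hA.1.eigenvalues i), hA.1.eigenvalues i ^ q
      ≤ ∑ i ∈ univ.filter (fun i => 0 < hA.1.eigenvalues i), hA.1.eigenvalues i :=
        sum_le_sum fun i _ ↦ Real.rpow_le_self_of_le_one (hA.eigenvalues_nonneg i) (hle i) hq
    _ ≤ ∑ i, hA.1.eigenvalues i :=
        sum_le_sum_of_subset_of_nonneg (filter_subset _ _) fun i _ _ ↦ hA.eigenvalues_nonneg i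
    _ = 1 := hsum

end Matrix.PosSemidef

section PartialTrace

variable {α β δ γ : Type*}

theorem ptraceB_posSemidef [Fintype β] {ρ : Matrix (α × β × δ) (α × β × δ) ℂ}
    (hρ : ρ.PosSemidef) : (ptraceB ρ).PosSemidef := by
  have : ptraceB ρ = ∑ b : β, ρ.submatrix (fun w : α × δ => (w.1, b, w.2))
      (fun w : α × δ => (w.1, b, w.2)) := by
    ext w w'
    simp [ptraceB, Matrix.sum_apply]
  exact this ▸ posSemidef_sum _ fun b _ ↦ hρ.submatrix _

theorem ptraceA_posSemidef [Fintype α] {ρ : Matrix (α × β × δ) (α × β × δ) ℂ}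
    (hρ : ρ.PosSemidef) : (ptraceA ρ).PosSemidef := by
  have : ptraceA ρ = ∑ a : α, ρ.submatrix (fun w : β × δ => (a, w.1, w.2))
      (fun w : β × δ => (a, w.1, w.2)) := by
    ext w w'
    simp [ptraceA, Matrix.sum_apply]
  exact this ▸ posSemidef_sum _ fun a _ ↦ hρ.submatrix _

theorem ptraceAB_posSemidef [Fintype α] [Fintype β] {ρ : Matrix (α × β × δ) (α × β × δ) ℂ}
    (hρ : ρ.PosSemidef) : (ptraceAB ρ).PosSemidef := by
  have : ptraceAB ρ = ∑ p : α × β, ρ.submatrix (fun d : δ => (p.1, p.2, d))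
      (fun d : δ => (p.1, p.2, d)) := by
    ext w w'
    simp [ptraceAB, Matrix.sum_apply, Fintype.sum_prod_type]
  exact this ▸ posSemidef_sum _ fun p _ ↦ hρ.submatrix _

theorem ptraceB4_kronecker [Fintype β] (σ : Matrix γ γ ℂ)
    (ρ : Matrix (α × β × δ) (α × β × δ) ℂ) : ptraceB4 (σ ⊗ₖ ρ) = σ ⊗ₖ ptraceB ρ := by
  ext w w'
  simp [ptraceB4, ptraceB, mul_sum]

theorem ptraceA4_kronecker [Fintype α] (σ : Matrix γ γ ℂ)
    (ρ : Matrix (α × β × δ) (α × β × δ) ℂ) : ptraceA4 (σ ⊗ₖ ρ) = σ ⊗ₖ ptraceA ρ := by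
  ext w w'
  simp [ptraceA4, ptraceA, mul_sum]

theorem ptraceAB4_kronecker [Fintype α] [Fintype β] (σ : Matrix γ γ ℂ)
    (ρ : Matrix (α × β × δ) (α × β × δ) ℂ) : ptraceAB4 (σ ⊗ₖ ρ) = σ ⊗ₖ ptraceAB ρ := by
  ext w w'
  simp [ptraceAB4, ptraceAB, mul_sum]

end PartialTrace

section TsallisEntropy

variable {n m : Type*} [Fintype n] [DecidableEq n] [Fintype m] [DecidableEq m]
  {A : Matrix n n ℂ} {B : Matrix m m ℂ}

theorem qTsallis_of_isHermitian (q : ℝ) (hA : A.IsHermitian) :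
    qTsallis q A = 1 / (1 - q) *
      ((∑ i ∈ univ.filter (fun i => 0 < hA.eigenvalues i), hA.eigenvalues i ^ q) - 1) :=
  dif_pos hA

theorem qTsallis_kronecker (q : ℝ) (hA : A.PosSemidef) (hB : B.PosSemidef) :
    qTsallis q (A ⊗ₖ B) = 1 / (1 - q) *
      ((∑ i ∈ univ.filter (fun i => 0 < hA.1.eigenvalues i), hA.1.eigenvalues i ^ q)
        * (∑ i ∈ univ.filter (fun i => 0 < hB.1.eigenvalues i), hB.1.eigenvalues i ^ q) - 1) := by
  rw [qTsallis_of_isHermitian q (hA.kronecker hB).1, hA.sum_pos_rpow_eigenvalues_kronecker q hB]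

end TsallisEntropy

theorem qTsallis_condMutualInfo_kronecker {γ α β δ : Type*} [Fintype γ] [DecidableEq γ]
    [Fintype α] [DecidableEq α] [Fintype β] [DecidableEq β] [Fintype δ] [DecidableEq δ]
    (q : ℝ) {σ : Matrix γ γ ℂ} (hσ : σ.PosSemidef) {ρ : Matrix (α × β × δ) (α × β × δ) ℂ}
    (hρ : ρ.PosSemidef) :
    qTsallis q (ptraceB4 (σ ⊗ₖ ρ)) + qTsallis q (ptraceA4 (σ ⊗ₖ ρ))
        - qTsallis q (ptraceAB4 (σ ⊗ₖ ρ)) - qTsallis q (σ ⊗ₖ ρ)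
      = (∑ i ∈ univ.filter (fun i => 0 < hσ.1.eigenvalues i), hσ.1.eigenvalues i ^ q)
        * (qTsallis q (ptraceB ρ) + qTsallis q (ptraceA ρ)
            - qTsallis q (ptraceAB ρ) - qTsallis q ρ) := by
  have hB := ptraceB_posSemidef hρ
  have hA := ptraceA_posSemidef hρ
  have hAB := ptraceAB_posSemidef hρ
  rw [ptraceB4_kronecker, ptraceA4_kronecker, ptraceAB4_kronecker,
    qTsallis_kronecker q hσ hB, qTsallis_kronecker q hσ hA, qTsallis_kronecker q hσ hAB,
    qTsallis_kronecker q hσ hρ, qTsallis_of_isHermitian q hB.1, qTsallis_of_isHermitian q hA.1,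
    qTsallis_of_isHermitian q hAB.1, qTsallis_of_isHermitian q hρ.1]
  ring

theorem fBound_nonneg {q : ℝ} (hq : 1 < q) (a b : ℕ) : 0 ≤ fBound q a b := by
  have hpow_le_one (c : ℕ) : (c : ℝ) ^ (1 - q) ≤ 1 := by
    rcases c.eq_zero_or_pos with rfl | hc
    · simp [Real.zero_rpow (by linarith : 1 - q ≠ 0)]
    · exact Real.rpow_le_one_of_one_le_of_nonpos (by exact_mod_cast hc) (by linarith)
  exact mul_nonneg (mul_nonneg (one_div_pos.mpr (by linarith)).le
    (sub_nonneg.mpr (hpow_le_one a))) (sub_nonneg.mpr (hpow_le_one b))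

theorem quantum_tsallis_cond_mutual_info_tensor_general
    {dA dB dD dC : ℕ}
    (τ : Matrix (Fin dA × Fin dB × Fin dD) (Fin dA × Fin dB × Fin dD) ℂ)
    (hτ : τ.PosSemidef)
    (σ : Matrix (Fin dC) (Fin dC) ℂ)
    (hσ : σ.PosSemidef) (hσ1 : σ.trace = 1)
    (q : ℝ) :
    qTsallis q (ptraceB4 (σ ⊗ₖ τ)) + qTsallis q (ptraceA4 (σ ⊗ₖ τ))
        - qTsallis q (ptraceAB4 (σ ⊗ₖ τ)) - qTsallis q (σ ⊗ₖ τ)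
      = (∑ i ∈ univ.filter (fun i => 0 < hσ.1.eigenvalues i), hσ.1.eigenvalues i ^ q)
        * (qTsallis q (ptraceB τ) + qTsallis q (ptraceA τ)
            - qTsallis q (ptraceAB τ) - qTsallis q τ)
    ∧ (1 < q →
        qTsallis q (ptraceB τ) + qTsallis q (ptraceA τ)
            - qTsallis q (ptraceAB τ) - qTsallis q τ ≤ fBound q dA dB →
        qTsallis q (ptraceB4 (σ ⊗ₖ τ)) + qTsallis q (ptraceA4 (σ ⊗ₖ τ))
            - qTsallis q (ptraceAB4 (σ ⊗ₖ τ)) - qTsallis q (σ ⊗ₖ τ)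
          ≤ fBound q dA dB) := by
  have hI := qTsallis_condMutualInfo_kronecker q hσ hτ
  refine ⟨hI, fun hq hle ↦ ?_⟩
  have hP0 : 0 ≤ ∑ i ∈ univ.filter (fun i => 0 < hσ.1.eigenvalues i), hσ.1.eigenvalues i ^ q :=
    sum_nonneg fun i _ ↦ Real.rpow_nonneg (hσ.eigenvalues_nonneg i) q
  rw [hI]
  calc _ ≤ (∑ i ∈ univ.filter (fun i => 0 < hσ.1.eigenvalues i), hσ.1.eigenvalues i ^ q)
        * fBound q dA dB := mul_le_mul_of_nonneg_left hle hP0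
    _ ≤ fBound q dA dB :=
        mul_le_of_le_one_left (fBound_nonneg hq dA dB)
          (hσ.sum_pos_rpow_eigenvalues_le_one hq.le hσ1)

/-- For `σ̂ = σ ⊗ τ`, with `τ` a state on `A × B × D` and `σ` a state on `C`,
the conditional quantum Tsallis mutual information satisfies
`I_q(A:B|CD)_{σ̂} = (∑_{μ_i > 0} μ_i^q) · I_q(A:B|D)_τ`, where `μ_i` are the
eigenvalues of `σ`; consequently, for `q > 1`, if `I_q(A:B|D)_τ ≤ f(q,d_A,d_B)`
then `I_q(A:B|CD)_{σ̂} ≤ f(q,d_A,d_B)`. -/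
theorem quantum_tsallis_cond_mutual_info_tensor
    {dA dB dD dC : ℕ}
    (τ : Matrix (Fin dA × Fin dB × Fin dD) (Fin dA × Fin dB × Fin dD) ℂ)
    (hτ : τ.PosSemidef) (hτ1 : τ.trace = 1)
    (σ : Matrix (Fin dC) (Fin dC) ℂ)
    (hσ : σ.PosSemidef) (hσ1 : σ.trace = 1)
    (q : ℝ) (hq : 0 < q) (hq1 : q ≠ 1) :
    qTsallis q (ptraceB4 (σ ⊗ₖ τ)) + qTsallis q (ptraceA4 (σ ⊗ₖ τ))
        - qTsallis q (ptraceAB4 (σ ⊗ₖ τ)) - qTsallis q (σ ⊗ₖ τ)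
      = (∑ i ∈ univ.filter (fun i => 0 < hσ.1.eigenvalues i), hσ.1.eigenvalues i ^ q)
        * (qTsallis q (ptraceB τ) + qTsallis q (ptraceA τ)
            - qTsallis q (ptraceAB τ) - qTsallis q τ)
    ∧ (1 < q →
        qTsallis q (ptraceB τ) + qTsallis q (ptraceA τ)
            - qTsallis q (ptraceAB τ) - qTsallis q τ ≤ fBound q dA dB →
        qTsallis q (ptraceB4 (σ ⊗ₖ τ)) + qTsallis q (ptraceA4 (σ ⊗ₖ τ))
            - qTsallis q (ptraceAB4 (σ ⊗ₖ τ)) - qTsallis q (σ ⊗ₖ τ)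
          ≤ fBound q dA dB) :=
  quantum_tsallis_cond_mutual_info_tensor_general τ hτ σ hσ hσ1 q
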